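/- Ginzburg–Landau energy lower bound: for any continuously differentiable φ : [a,b] → ℝ with φ(a) = −1 and φ(b) = 1, the energy ∫_a^b ( (ε/2)|φ'|² + ε⁻¹ W(φ) ) dx is at least ∫_{−1}^{1} √(2W(s)) ds = 2√2/3, independently of ε > 0. -/

import Mathlib

/-!
Modica–Mortola trick: by Young's inequality the energy density dominates `√(2W(φ)) φ'`, which is
the derivative of `G ∘ φ` for a primitive `G` of `√(2W)`. Hence the energy on `[a, b]` is at least
`∫_{φ a}^{φ b} √(2W)`, whatever `ε` is; for `W(s) = (s² - 1)²/4` and `φ` going from `-1` to `1`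
this equals `∫_{-1}^{1} (1 - s²)/√2 ds = 2√2/3`.
-/

open Real intervalIntegral

lemma sqrt_two_mul_mul_le {ε w : ℝ} (hε : 0 < ε) (hw : 0 ≤ w) (p : ℝ) :
    √(2 * w) * p ≤ ε / 2 * p ^ 2 + ε⁻¹ * w := by
  have hsq : √(2 * w) ^ 2 = 2 * w := sq_sqrt (by positivity)
  have gap : ε / 2 * p ^ 2 + ε⁻¹ * w - √(2 * w) * p = (ε * p - √(2 * w)) ^ 2 / (2 * ε) := by
    field_simp
    linear_combination (-1 : ℝ) * hsq
  have : 0 ≤ (ε * p - √(2 * w)) ^ 2 / (2 * ε) := by positivity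
  linarith

theorem integral_sqrt_two_mul_le_energy {ε a b : ℝ} (hε : 0 < ε) (hab : a ≤ b) {φ : ℝ → ℝ}
    (hφ : ContDiff ℝ 1 φ) {W : ℝ → ℝ} (hW : Continuous W) (hW₀ : ∀ s, 0 ≤ W s) :
    ∫ s in φ a..φ b, √(2 * W s) ≤
      ∫ x in a..b, (ε / 2 * (deriv φ x) ^ 2 + ε⁻¹ * W (φ x)) := by
  have hφ' : Continuous (deriv φ) := hφ.continuous_deriv le_rfl
  have hsqrtW : Continuous fun s => √(2 * W s) := (continuous_const.mul hW).sqrt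
  rw [← integral_comp_mul_deriv
    (fun x _ => (hφ.differentiable one_ne_zero x).hasDerivAt) hφ'.continuousOn hsqrtW]
  refine integral_mono_on hab ((hsqrtW.comp hφ.continuous).mul hφ' |>.intervalIntegrable a b)
    ?_ fun x _ => sqrt_two_mul_mul_le hε (hW₀ (φ x)) (deriv φ x)
  exact ((continuous_const.mul (hφ'.pow 2)).add
    (continuous_const.mul (hW.comp hφ.continuous))).intervalIntegrable a b

noncomputable def doubleWell (s : ℝ) : ℝ := 1 / 4 * (s ^ 2 - 1) ^ 2

lemma continuous_doubleWell : Continuous doubleWell := by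
  unfold doubleWell; fun_prop

lemma doubleWell_nonneg (s : ℝ) : 0 ≤ doubleWell s := by
  unfold doubleWell; positivity

lemma sqrt_two_mul_doubleWell (s : ℝ) : √(2 * doubleWell s) = |s ^ 2 - 1| / √2 := by
  have h : 2 * doubleWell s = ((s ^ 2 - 1) / √2) ^ 2 := by
    rw [doubleWell, div_pow, sq_sqrt zero_le_two]; ring
  rw [h, sqrt_sq_eq_abs, abs_div, abs_of_pos (sqrt_pos.2 two_pos)]

lemma integral_sqrt_two_mul_doubleWell :
    ∫ s in (-1 : ℝ)..1, √(2 * doubleWell s) = 2 * √2 / 3 := by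
  have on_Icc : ∀ s ∈ Set.uIcc (-1 : ℝ) 1, √(2 * doubleWell s) = (1 - s ^ 2) / √2 := by
    intro s hs
    rw [Set.uIcc_of_le (by norm_num)] at hs
    rw [sqrt_two_mul_doubleWell, abs_of_nonpos (by nlinarith [hs.1, hs.2]), neg_sub]
  rw [integral_congr on_Icc, integral_div,
    integral_sub intervalIntegrable_const ((continuous_pow 2).intervalIntegrable _ _)]
  simp only [integral_const, integral_pow]
  field_simp
  norm_num

/-- Modica–Mortola lower bound: for any C¹ profile connecting -1 to 1, the
Ginzburg–Landau energy is at least `∫_{-1}^{1} √(2W(s)) ds = 2√2/3`,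
independently of `ε > 0`, where `W(s) = (1/4)(s²-1)²`. -/
theorem stmt10 (ε a b : ℝ) (hε : 0 < ε) (hab : a ≤ b) (φ : ℝ → ℝ)
    (hφ : ContDiff ℝ 1 φ) (ha : φ a = -1) (hb : φ b = 1) :
    (∫ s in (-1:ℝ)..1, Real.sqrt (2 * ((1/4) * (s^2 - 1)^2))) = 2 * Real.sqrt 2 / 3 ∧
    2 * Real.sqrt 2 / 3 ≤
      ∫ x in a..b, (ε/2 * (deriv φ x)^2 + ε⁻¹ * ((1/4) * ((φ x)^2 - 1)^2)) := by
  refine ⟨integral_sqrt_two_mul_doubleWell, ?_⟩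
  have bound := integral_sqrt_two_mul_le_energy hε hab hφ continuous_doubleWell doubleWell_nonneg
  rw [ha, hb, integral_sqrt_two_mul_doubleWell] at bound
  exact bound
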